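/- Let Δ be a simplicial complex on [n] which is PR over a field K, and let σ be a face of Δ such that the reduced homology H̃_j(link_Δ σ; K) is nonzero for some j ≥ 0. Then there exists a face τ of Δ strictly containing σ such that H̃_{j−1}(link_Δ τ; K) ≠ 0. -/

import Mathlib

open Finset

namespace SRPure

variable {V : Type*}

/-- A downward closed set of finite sets: the faces of an abstract simplicial complex. -/
def IsDown (Δ : Set (Finset V)) : Prop := ∀ s ∈ Δ, ∀ t ⊆ s, t ∈ Δ

/-- A facet is a maximal face. -/
def IsFacet (Δ : Set (Finset V)) (F : Finset V) : Prop :=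
  F ∈ Δ ∧ ∀ G ∈ Δ, F ⊆ G → F = G

section Link

variable [DecidableEq V]

/-- The link of a face `σ`. -/
def link (Δ : Set (Finset V)) (σ : Finset V) : Set (Finset V) :=
  {τ | Disjoint τ σ ∧ τ ∪ σ ∈ Δ}

theorem link_down {Δ : Set (Finset V)} (hΔ : IsDown Δ) (σ : Finset V) :
    IsDown (link Δ σ) := by
  rintro s ⟨hd, hu⟩ t hts
  exact ⟨hd.mono_left hts, hΔ _ hu _ (Finset.union_subset_union hts (Finset.Subset.refl σ))⟩

end Link

section Homology

variable (K : Type*) [Field K] [LinearOrder V]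

/-- Simplicial chains spanned by the faces of cardinality `c`. -/
abbrev Chains (Δ : Set (Finset V)) (c : ℕ) : Type _ :=
  {s : Finset V // s ∈ Δ ∧ s.card = c} →₀ K

/-- The boundary of a single face of cardinality `c+1`. -/
noncomputable def faceBdry {Δ : Set (Finset V)} (hΔ : IsDown Δ) (c : ℕ)
    (s : {s : Finset V // s ∈ Δ ∧ s.card = c + 1}) : Chains K Δ c :=
  ∑ v ∈ s.1.attach,
    ((-1 : K) ^ ((s.1.filter (fun w => w < v.1)).card)) •
      Finsupp.single
        ⟨s.1.erase v.1, hΔ _ s.2.1 _ (Finset.erase_subset _ _),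
          by simp [Finset.card_erase_of_mem v.2, s.2.2]⟩ (1 : K)

/-- The simplicial boundary map. -/
noncomputable def bdry {Δ : Set (Finset V)} (hΔ : IsDown Δ) (c : ℕ) :
    Chains K Δ (c + 1) →ₗ[K] Chains K Δ c :=
  Finsupp.lsum K fun s => LinearMap.toSpanSingleton K _ (faceBdry K hΔ c s)

/-- Reduced cycles in cardinality `c` (homological degree `c - 1`). -/
noncomputable def cycles {Δ : Set (Finset V)} (hΔ : IsDown Δ) :
    (c : ℕ) → Submodule K (Chains K Δ c)
  | 0 => ⊤
  | c + 1 => LinearMap.ker (bdry K hΔ c)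

/-- `RH K hΔ c` is the reduced simplicial homology (with coefficients in `K`) of the
complex in homological degree `c - 1`, indexed by the cardinality `c` of faces; so
`RH K hΔ 0` is `H̃₋₁` and `RH K hΔ (i+1)` is `H̃ᵢ`. -/
noncomputable abbrev RH {Δ : Set (Finset V)} (hΔ : IsDown Δ) (c : ℕ) :=
  @HasQuotient.Quotient (cycles K hΔ c) (Submodule K (cycles K hΔ c))
    (Submodule.hasQuotient (R := K) (M := cycles K hΔ c))
    (Submodule.comap (cycles K hΔ c).subtype (LinearMap.range (bdry K hΔ c)))

/-- A complex is PR (has a "pure resolution") over `K` if links of faces of different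
sizes never have nontrivial reduced homology in the same degree. -/
def IsPR {Δ : Set (Finset V)} (hΔ : IsDown Δ) : Prop :=
  ∀ σ ∈ Δ, ∀ τ ∈ Δ, ∀ c : ℕ,
    Nontrivial (RH K (link_down hΔ σ) c) →
    Nontrivial (RH K (link_down hΔ τ) c) → σ.card = τ.card

end Homology

end SRPure

/-! Replacing `Δ` by `Γ = link_Δ σ`, whose links are `link_Γ g = link_Δ (σ ∪ g)`, it suffices
to show that a complex `Γ` with `H̃_j(Γ) ≠ 0` has a nonempty face `g` with
`H̃_{j-1}(link_Γ g) ≠ 0`. Induct on the vertex set and let `v` be its largest vertex. `Γ` is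
the union of the deletion `Γ ∖ v` and the cone `v * link_Γ v`, glued along `link_Γ v`, and
contracting chains at `v` gives the exact pieces
  `H̃_j(Γ ∖ v) → H̃_j(Γ) → H̃_{j-1}(link_Γ v)` and `H̃_i(link_Γ v) → H̃_i(Γ ∖ v) → H̃_i(Γ)`.
If the class survives in `H̃_{j-1}(link_Γ v)`, take `g = {v}`. Otherwise it comes from `Γ ∖ v`,
and induction gives `g ∌ v` with `H̃_{j-1}(link_{Γ ∖ v} g) ≠ 0`. As
`link_{Γ ∖ v} g = (link_Γ g) ∖ v`, the second sequence moves this class to `link_Γ g` or to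
`link_{link_Γ g} v = link_Γ (g ∪ {v})`.
Because `v` is the largest vertex, deleting it from a face does not change the signs
`(-1) ^ #{w | w < x}` of the other vertices, so contraction at `v` commutes with the boundary. -/

namespace SRPure

section Complexes

variable {V : Type*} {Γ : Set (Finset V)}

def deletion (Γ : Set (Finset V)) (v : V) : Set (Finset V) := {f ∈ Γ | v ∉ f}

theorem IsDown.deletion (hΓ : IsDown Γ) (v : V) : IsDown (deletion Γ v) :=
  fun s hs t hts => ⟨hΓ s hs.1 t hts, fun hv => hs.2 (hts hv)⟩

theorem deletion_subset (Γ : Set (Finset V)) (v : V) : deletion Γ v ⊆ Γ := fun _ h => h.1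

abbrev Face (Γ : Set (Finset V)) (c : ℕ) : Type _ := {s : Finset V // s ∈ Γ ∧ s.card = c}

def Face.incl {Γ₁ Γ₂ : Set (Finset V)} (h : Γ₁ ⊆ Γ₂) {c : ℕ} (s : Face Γ₁ c) : Face Γ₂ c :=
  ⟨s.1, h s.2.1, s.2.2⟩

theorem Face.incl_injective {Γ₁ Γ₂ : Set (Finset V)} (h : Γ₁ ⊆ Γ₂) (c : ℕ) :
    Function.Injective (Face.incl h (c := c)) :=
  fun _ _ hst => Subtype.ext (congrArg (fun f : Face Γ₂ c => f.1) hst)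

variable [DecidableEq V]

theorem mem_link_singleton {v : V} {t : Finset V} :
    t ∈ link Γ {v} ↔ v ∉ t ∧ insert v t ∈ Γ := by
  rw [link, Set.mem_ofPred_eq, disjoint_singleton_right, insert_eq, union_comm]

theorem mem_of_mem_link (hΓ : IsDown Γ) {σ τ : Finset V} (h : τ ∈ link Γ σ) : σ ∈ Γ :=
  hΓ _ h.2 _ subset_union_right

theorem link_singleton_subset (hΓ : IsDown Γ) (v : V) : link Γ {v} ⊆ Γ :=
  fun t ht => hΓ _ (mem_link_singleton.1 ht).2 _ (subset_insert v t)

theorem link_deletion {v : V} {g : Finset V} (hvg : v ∉ g) :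
    link (deletion Γ v) g = deletion (link Γ g) v := by
  ext τ
  simp only [link, deletion, Set.mem_ofPred_eq, mem_union, hvg, or_false, and_assoc]

theorem link_link {σ g : Finset V} (h : Disjoint g σ) :
    link (link Γ σ) g = link Γ (σ ∪ g) := by
  ext τ
  simp only [link, Set.mem_ofPred_eq, disjoint_union_left, disjoint_union_right, h, and_true,
    union_assoc, union_comm g σ]
  tauto

def Face.cone (Γ : Set (Finset V)) (v : V) {c : ℕ} (t : Face (link Γ {v}) c) : Face Γ (c + 1) :=
  ⟨insert v t.1, (mem_link_singleton.1 t.2.1).2, by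
    rw [card_insert_of_notMem (mem_link_singleton.1 t.2.1).1, t.2.2]⟩

theorem Face.cone_injective (Γ : Set (Finset V)) (v : V) (c : ℕ) :
    Function.Injective (Face.cone Γ v (c := c)) := by
  rintro ⟨s, hs⟩ ⟨t, ht⟩ hst
  have := congrArg (fun f : Face Γ (c + 1) => f.1.erase v) hst
  simp only [Face.cone, erase_insert (mem_link_singleton.1 hs.1).1,
    erase_insert (mem_link_singleton.1 ht.1).1] at this
  exact Subtype.ext this

end Complexes

section ChainMaps

variable {V : Type*} (K : Type*) [Field K] {Γ Γ₁ Γ₂ : Set (Finset V)}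

open scoped Classical in
noncomputable def faceChain (Γ : Set (Finset V)) (c : ℕ) (s : Finset V) : Chains K Γ c :=
  if h : s ∈ Γ ∧ s.card = c then Finsupp.single ⟨s, h⟩ 1 else 0

theorem single_eq_smul_faceChain {c : ℕ} (s : Face Γ c) (b : K) :
    Finsupp.single s b = b • faceChain K Γ c s.1 := by
  rw [faceChain, dif_pos s.2, Finsupp.smul_single, smul_eq_mul, mul_one]

namespace Chains

noncomputable def incl (h : Γ₁ ⊆ Γ₂) (c : ℕ) : Chains K Γ₁ c →ₗ[K] Chains K Γ₂ c :=
  Finsupp.lmapDomain K K (Face.incl h)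

theorem incl_single (h : Γ₁ ⊆ Γ₂) {c : ℕ} (s : Face Γ₁ c) (b : K) :
    incl K h c (Finsupp.single s b) = Finsupp.single (Face.incl h s) b :=
  Finsupp.mapDomain_single

theorem incl_faceChain (h : Γ₁ ⊆ Γ₂) {c : ℕ} {s : Finset V} (hs : s ∈ Γ₁) :
    incl K h c (faceChain K Γ₁ c s) = faceChain K Γ₂ c s := by
  by_cases hc : s.card = c
  · rw [faceChain, dif_pos ⟨hs, hc⟩, incl_single, faceChain, dif_pos ⟨h hs, hc⟩]; rfl
  · rw [faceChain, dif_neg (by tauto), map_zero, faceChain, dif_neg (by tauto)]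

theorem incl_injective (h : Γ₁ ⊆ Γ₂) (c : ℕ) : Function.Injective (incl K h c) :=
  Finsupp.mapDomain_injective (Face.incl_injective h c)

variable [DecidableEq V]

noncomputable def cone (Γ : Set (Finset V)) (v : V) (c : ℕ) :
    Chains K (link Γ {v}) c →ₗ[K] Chains K Γ (c + 1) :=
  Finsupp.lmapDomain K K (Face.cone Γ v)

noncomputable def contract (Γ : Set (Finset V)) (v : V) (c : ℕ) :
    Chains K Γ (c + 1) →ₗ[K] Chains K (link Γ {v}) c :=
  Finsupp.lcomapDomain (Face.cone Γ v) (Face.cone_injective Γ v c)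

theorem contract_apply {v : V} {c : ℕ} (z : Chains K Γ (c + 1)) (t : Face (link Γ {v}) c) :
    contract K Γ v c z t = z (Face.cone Γ v t) :=
  rfl

theorem cone_single {v : V} {c : ℕ} (t : Face (link Γ {v}) c) (b : K) :
    cone K Γ v c (Finsupp.single t b) = Finsupp.single (Face.cone Γ v t) b :=
  Finsupp.mapDomain_single

theorem cone_faceChain {v : V} {c : ℕ} {s : Finset V} (hvs : v ∉ s) :
    cone K Γ v c (faceChain K (link Γ {v}) c s) = faceChain K Γ (c + 1) (insert v s) := by
  have hiff : (s ∈ link Γ {v} ∧ s.card = c) ↔ (insert v s ∈ Γ ∧ (insert v s).card = c + 1) := by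
    rw [mem_link_singleton, card_insert_of_notMem hvs]
    simp [hvs]
  by_cases hs : s ∈ link Γ {v} ∧ s.card = c
  · rw [faceChain, dif_pos hs, cone_single, faceChain, dif_pos (hiff.1 hs)]; rfl
  · rw [faceChain, dif_neg hs, map_zero, faceChain, dif_neg (hiff.not.1 hs)]

theorem contract_cone {v : V} {c : ℕ} (x : Chains K (link Γ {v}) c) :
    contract K Γ v c (cone K Γ v c x) = x :=
  Finsupp.comapDomain_mapDomain _ (Face.cone_injective Γ v c) x

theorem contract_incl {Γ' : Set (Finset V)} (h : Γ' ⊆ Γ) {v : V} (hv : ∀ f ∈ Γ', v ∉ f)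
    {c : ℕ} (x : Chains K Γ' (c + 1)) : contract K Γ v c (incl K h (c + 1) x) = 0 := by
  ext t
  refine Finsupp.mapDomain_of_notMem_range x _ ?_
  rintro ⟨s, hs⟩
  exact hv s.1 s.2.1 (congrArg Subtype.val hs ▸ mem_insert_self v t.1)

theorem exists_incl_deletion_eq_of_contract_eq_zero {v : V} {c : ℕ} {z : Chains K Γ (c + 1)}
    (hz : contract K Γ v c z = 0) : ∃ z₀, incl K (deletion_subset Γ v) (c + 1) z₀ = z := by
  refine (Finsupp.mem_range_mapDomain_iff _ (Face.incl_injective _ _) z).2 fun s hs => ?_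
  have hvs : v ∈ s.1 := by
    by_contra hvs
    exact hs ⟨⟨s.1, ⟨s.2.1, hvs⟩, s.2.2⟩, rfl⟩
  have ht : s.1.erase v ∈ link Γ {v} := by
    rw [mem_link_singleton, insert_erase hvs]
    exact ⟨notMem_erase v s.1, s.2.1⟩
  have hc : (s.1.erase v).card = c := by rw [card_erase_of_mem hvs, s.2.2, Nat.add_sub_cancel]
  have hst : Face.cone Γ v ⟨s.1.erase v, ht, hc⟩ = s := Subtype.ext (insert_erase hvs)
  rw [← hst, ← contract_apply, hz, Finsupp.coe_zero, Pi.zero_apply]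

end Chains

end ChainMaps

section Boundary

variable {V : Type*} [LinearOrder V] (K : Type*) [Field K] {Γ Γ₁ Γ₂ : Set (Finset V)}

theorem faceBdry_eq_sum (hΓ : IsDown Γ) {c : ℕ} (s : Face Γ (c + 1)) :
    faceBdry K hΓ c s =
      ∑ x ∈ s.1, (-1 : K) ^ #{w ∈ s.1 | w < x} • faceChain K Γ c (s.1.erase x) := by
  rw [faceBdry, ← sum_attach s.1]
  refine sum_congr rfl fun x _ => ?_
  rw [faceChain, dif_pos]

theorem bdry_single (hΓ : IsDown Γ) {c : ℕ} (s : Face Γ (c + 1)) (b : K) :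
    bdry K hΓ c (Finsupp.single s b) = b • faceBdry K hΓ c s := by
  rw [bdry, Finsupp.lsum_single, LinearMap.toSpanSingleton_apply]

theorem mem_cycles_succ (hΓ : IsDown Γ) {c : ℕ} {z : Chains K Γ (c + 1)} :
    z ∈ cycles K hΓ (c + 1) ↔ bdry K hΓ c z = 0 :=
  Iff.rfl

namespace Chains

theorem bdry_incl (h₁ : IsDown Γ₁) (h₂ : IsDown Γ₂) (h : Γ₁ ⊆ Γ₂) {c : ℕ}
    (z : Chains K Γ₁ (c + 1)) :
    bdry K h₂ c (incl K h (c + 1) z) = incl K h c (bdry K h₁ c z) := by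
  induction z using Finsupp.induction_linear with
  | zero => simp
  | add a b ha hb => simp only [map_add, ha, hb]
  | single s b =>
    rw [incl_single, bdry_single, bdry_single, map_smul, faceBdry_eq_sum, faceBdry_eq_sum,
      map_sum]
    congr 1
    refine sum_congr rfl fun x _ => ?_
    rw [map_smul, incl_faceChain K h (h₁ _ s.2.1 _ (erase_subset _ _))]
    rfl

theorem incl_mem_cycles (h₁ : IsDown Γ₁) (h₂ : IsDown Γ₂) (h : Γ₁ ⊆ Γ₂) {c : ℕ}
    {z : Chains K Γ₁ c} (hz : z ∈ cycles K h₁ c) : incl K h c z ∈ cycles K h₂ c := by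
  cases c with
  | zero => trivial
  | succ c => rw [mem_cycles_succ, bdry_incl K h₁ h₂, (mem_cycles_succ K h₁).1 hz, map_zero]

variable (hΓ : IsDown Γ) {v : V} (hv : ∀ f ∈ Γ, ∀ x ∈ f, x ≤ v)
include hv

theorem faceBdry_cone {c : ℕ} (t : Face (link Γ {v}) c) :
    faceBdry K hΓ c (Face.cone Γ v t) =
      (-1 : K) ^ c • faceChain K Γ c t.1 +
        ∑ x ∈ t.1, (-1 : K) ^ #{w ∈ t.1 | w < x} • faceChain K Γ c (insert v (t.1.erase x)) := by
  obtain ⟨hvt, hvtΓ⟩ := mem_link_singleton.1 t.2.1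
  have hlt : ∀ x ∈ t.1, x < v := fun x hx =>
    (hv _ hvtΓ x (mem_insert_of_mem hx)).lt_of_ne fun hxv => hvt (hxv ▸ hx)
  rw [faceBdry_eq_sum]
  simp only [Face.cone]
  rw [sum_insert hvt, filter_insert, if_neg (lt_irrefl v), filter_true_of_mem hlt, t.2.2,
    erase_insert hvt]
  congr 1
  refine sum_congr rfl fun x hx => ?_
  rw [filter_insert, if_neg (lt_asymm (hlt x hx)), erase_insert_of_ne (hlt x hx).ne']

theorem bdry_cone_zero (x : Chains K (link Γ {v}) 0) :
    bdry K hΓ 0 (cone K Γ v 0 x) = incl K (link_singleton_subset hΓ v) 0 x := by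
  induction x using Finsupp.induction_linear with
  | zero => simp
  | add a b ha hb => rw [map_add, map_add, ha, hb, map_add]
  | single t b =>
    have ht : t.1 = ∅ := card_eq_zero.1 t.2.2
    rw [cone_single, bdry_single, faceBdry_cone K hΓ hv, incl_single, single_eq_smul_faceChain]
    change _ = b • faceChain K Γ 0 t.1
    simp only [ht, sum_empty, add_zero, pow_zero, one_smul]

theorem bdry_cone_succ {c : ℕ} (x : Chains K (link Γ {v}) (c + 1)) :
    bdry K hΓ (c + 1) (cone K Γ v (c + 1) x) =
      (-1 : K) ^ (c + 1) • incl K (link_singleton_subset hΓ v) (c + 1) x +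
        cone K Γ v c (bdry K (link_down hΓ {v}) c x) := by
  induction x using Finsupp.induction_linear with
  | zero => simp
  | add a b ha hb => rw [map_add, map_add, ha, hb, map_add, map_add, map_add, smul_add]; abel
  | single t b =>
    have hvt := (mem_link_singleton.1 t.2.1).1
    rw [cone_single, bdry_single, faceBdry_cone K hΓ hv, incl_single, bdry_single,
      faceBdry_eq_sum, single_eq_smul_faceChain, smul_add, smul_comm b, map_smul, map_sum]
    congr 2
    refine sum_congr rfl fun x _ => ?_
    rw [map_smul, cone_faceChain K fun h => hvt (mem_of_mem_erase h)]

theorem bdry_cone_of_mem_cycles {c : ℕ} {x : Chains K (link Γ {v}) c}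
    (hx : x ∈ cycles K (link_down hΓ {v}) c) :
    bdry K hΓ c (cone K Γ v c x) = (-1 : K) ^ c • incl K (link_singleton_subset hΓ v) c x := by
  cases c with
  | zero => rw [bdry_cone_zero K hΓ hv, pow_zero, one_smul]
  | succ c => rw [bdry_cone_succ K hΓ hv, (mem_cycles_succ K _).1 hx, map_zero, add_zero]

theorem contract_bdry {c : ℕ} (z : Chains K Γ (c + 2)) :
    contract K Γ v c (bdry K hΓ (c + 1) z) =
      bdry K (link_down hΓ {v}) c (contract K Γ v (c + 1) z) := by
  obtain ⟨z₀, hz₀⟩ := exists_incl_deletion_eq_of_contract_eq_zero K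
    (z := z - cone K Γ v (c + 1) (contract K Γ v (c + 1) z))
    (by rw [map_sub, contract_cone, sub_self])
  have hz : z = incl K (deletion_subset Γ v) (c + 2) z₀ + cone K Γ v (c + 1)
      (contract K Γ v (c + 1) z) := by
    rw [hz₀, sub_add_cancel]
  conv_lhs => rw [hz]
  rw [map_add, bdry_incl K (hΓ.deletion v) hΓ, bdry_cone_succ K hΓ hv, map_add, map_add,
    map_smul, contract_incl K _ fun f hf => hf.2,
    contract_incl K _ fun f hf => (mem_link_singleton.1 hf).1, contract_cone, smul_zero,
    zero_add, zero_add]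

end Chains

end Boundary

section Homology

variable {V : Type*} [LinearOrder V] (K : Type*) [Field K] {Γ : Set (Finset V)}

def HasHomology (hΓ : IsDown Γ) (c : ℕ) : Prop :=
  ∃ z ∈ cycles K hΓ c, z ∉ LinearMap.range (bdry K hΓ c)

theorem nontrivial_RH_iff (hΓ : IsDown Γ) (c : ℕ) :
    Nontrivial (RH K hΓ c) ↔ HasHomology K hΓ c := by
  have hss : Subsingleton (RH K hΓ c) ↔
      Submodule.comap (cycles K hΓ c).subtype (LinearMap.range (bdry K hΓ c)) = ⊤ :=
    Submodule.Quotient.subsingleton_iff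
  rw [← not_subsingleton_iff_nontrivial, hss, Submodule.comap_subtype_eq_top,
    SetLike.not_le_iff_exists]
  rfl

theorem hasHomology_congr {Γ' : Set (Finset V)} (hΓ : IsDown Γ) (hΓ' : IsDown Γ') (h : Γ = Γ')
    {c : ℕ} : HasHomology K hΓ c ↔ HasHomology K hΓ' c := by
  subst h
  rfl

variable {K} {hΓ : IsDown Γ}

theorem HasHomology.exists_face {c : ℕ} (h : HasHomology K hΓ c) : ∃ f ∈ Γ, f.card = c := by
  obtain ⟨z, -, hz⟩ := h
  have hz0 : z ≠ 0 := by
    rintro rfl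
    exact hz (zero_mem _)
  obtain ⟨s, -⟩ := Finsupp.support_nonempty_iff.2 hz0
  exact ⟨s.1, s.2⟩

theorem HasHomology.mem_of_link (hΓ : IsDown Γ) {g : Finset V} {c : ℕ}
    (h : HasHomology K (link_down hΓ g) c) : g ∈ Γ :=
  let ⟨_, hf, _⟩ := h.exists_face
  mem_of_mem_link hΓ hf

section Deletion

variable (K) (hΓ) {v : V} (hv : ∀ f ∈ Γ, ∀ x ∈ f, x ≤ v)
include hv

open Chains

theorem contract_mem_cycles {c : ℕ} {u : Chains K Γ (c + 1)}
    (hu : bdry K hΓ c u ∈ LinearMap.range (incl K (deletion_subset Γ v) c)) :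
    contract K Γ v c u ∈ cycles K (link_down hΓ {v}) c := by
  cases c with
  | zero => trivial
  | succ c =>
    obtain ⟨y, hy⟩ := hu
    rw [mem_cycles_succ, ← contract_bdry K hΓ hv, ← hy, contract_incl K _ fun f hf => hf.2]

theorem exists_incl_deletion_eq_sub_bdry {c : ℕ} {u : Chains K Γ (c + 1)}
    (hu : bdry K hΓ c u ∈ LinearMap.range (incl K (deletion_subset Γ v) c))
    (hu₁ : contract K Γ v c u ∈ LinearMap.range (bdry K (link_down hΓ {v}) c)) :
    ∃ u₀ b, incl K (deletion_subset Γ v) (c + 1) u₀ = u - bdry K hΓ (c + 1) b ∧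
      incl K (deletion_subset Γ v) c (bdry K (hΓ.deletion v) c u₀) = bdry K hΓ c u := by
  obtain ⟨w, hw⟩ := hu₁
  obtain ⟨u₀, hu₀⟩ := exists_incl_deletion_eq_of_contract_eq_zero K
    (z := u - bdry K hΓ (c + 1) (cone K Γ v (c + 1) w))
    (by rw [map_sub, contract_bdry K hΓ hv, contract_cone, hw, sub_self])
  refine ⟨u₀, cone K Γ v (c + 1) w, hu₀, ?_⟩
  rw [← bdry_incl K (hΓ.deletion v) hΓ, hu₀, map_sub, bdry_cone_succ K hΓ hv, map_add, map_smul,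
    bdry_incl K (link_down hΓ {v}) hΓ, hw,
    bdry_cone_of_mem_cycles K hΓ hv (contract_mem_cycles K hΓ hv hu), pow_succ, mul_neg_one,
    neg_smul, neg_add_cancel, sub_zero]

theorem hasHomology_deletion_or_link {c : ℕ} (h : HasHomology K hΓ (c + 1)) :
    HasHomology K (hΓ.deletion v) (c + 1) ∨ HasHomology K (link_down hΓ {v}) c := by
  obtain ⟨z, hz, hzb⟩ := h
  rw [mem_cycles_succ] at hz
  have hz' : bdry K hΓ c z ∈ LinearMap.range (incl K (deletion_subset Γ v) c) :=
    ⟨0, by rw [map_zero, hz]⟩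
  by_cases hz₁ : contract K Γ v c z ∈ LinearMap.range (bdry K (link_down hΓ {v}) c)
  · obtain ⟨z₀, b, hz₀, hbz₀⟩ := exists_incl_deletion_eq_sub_bdry K hΓ hv hz' hz₁
    refine Or.inl ⟨z₀, ?_, ?_⟩
    · rw [mem_cycles_succ]
      exact incl_injective K _ c (by rw [hbz₀, hz, map_zero])
    · rintro ⟨p, hp⟩
      refine hzb ⟨incl K (deletion_subset Γ v) (c + 2) p + b, ?_⟩
      rw [map_add, bdry_incl K (hΓ.deletion v) hΓ, hp, hz₀, sub_add_cancel]
  · exact Or.inr ⟨_, contract_mem_cycles K hΓ hv hz', hz₁⟩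

theorem hasHomology_or_link_of_deletion {c : ℕ} (h : HasHomology K (hΓ.deletion v) c) :
    HasHomology K hΓ c ∨ HasHomology K (link_down hΓ {v}) c := by
  obtain ⟨y, hy, hyb⟩ := h
  by_cases hb : incl K (deletion_subset Γ v) c y ∈ LinearMap.range (bdry K hΓ c)
  · obtain ⟨u, hu⟩ := hb
    have hu' : bdry K hΓ c u ∈ LinearMap.range (incl K (deletion_subset Γ v) c) := ⟨y, hu.symm⟩
    refine Or.inr ⟨_, contract_mem_cycles K hΓ hv hu', fun hu₁ => hyb ?_⟩
    obtain ⟨u₀, -, -, hbu₀⟩ := exists_incl_deletion_eq_sub_bdry K hΓ hv hu' hu₁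
    exact ⟨u₀, incl_injective K _ c (hbu₀.trans hu)⟩
  · exact Or.inl ⟨_, incl_mem_cycles K (hΓ.deletion v) hΓ _ hy, hb⟩

end Deletion

variable (K)

theorem exists_nonempty_hasHomology_link (W : Finset V) :
    ∀ {Γ : Set (Finset V)} (hΓ : IsDown Γ), (∀ f ∈ Γ, f ⊆ W) → ∀ {c : ℕ},
      HasHomology K hΓ (c + 1) → ∃ g : Finset V, g.Nonempty ∧ HasHomology K (link_down hΓ g) c := by
  induction W using Finset.induction_on_max with
  | empty =>
    intro Γ hΓ hW c h
    obtain ⟨f, hf, hfc⟩ := h.exists_face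
    rw [subset_empty.1 (hW f hf), card_empty] at hfc
    exact absurd hfc.symm c.succ_ne_zero
  | insert v W hlt ih =>
    intro Γ hΓ hW c h
    have hv : ∀ f ∈ Γ, ∀ x ∈ f, x ≤ v := fun f hf x hx => by
      rcases mem_insert.1 (hW f hf hx) with rfl | hxW
      exacts [le_rfl, (hlt x hxW).le]
    rcases hasHomology_deletion_or_link K hΓ hv h with hdel | hlk
    · obtain ⟨g, hg, hgH⟩ := ih (hΓ.deletion v)
        (fun f hf => (subset_insert_iff_of_notMem hf.2).1 (hW f hf.1)) hdel
      have hvg : v ∉ g := (hgH.mem_of_link (hΓ.deletion v)).2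
      rw [hasHomology_congr K _ ((link_down hΓ g).deletion v) (link_deletion hvg)] at hgH
      rcases hasHomology_or_link_of_deletion K (link_down hΓ g)
        (fun f hf x hx => hv _ hf.2 x (mem_union_left g hx)) hgH with hg' | hg'
      · exact ⟨g, hg, hg'⟩
      · rw [hasHomology_congr K _ (link_down hΓ (insert v g)) (by
          rw [link_link (disjoint_singleton_left.2 hvg), union_comm, ← insert_eq])] at hg'
        exact ⟨insert v g, insert_nonempty v g, hg'⟩
    · exact ⟨{v}, singleton_nonempty v, hlk⟩

end Homology

end SRPure

open SRPure in
theorem exists_larger_face_with_lower_link_homology_general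
    {V : Type*} [LinearOrder V] [Fintype V] (K : Type*) [Field K]
    (Δ : Set (Finset V)) (hΔ : IsDown Δ)
    (σ : Finset V) (j : ℕ)
    (h : Nontrivial (RH K (link_down hΔ σ) (j + 1))) :
    ∃ τ ∈ Δ, σ ⊂ τ ∧ Nontrivial (RH K (link_down hΔ τ) j) := by
  obtain ⟨g, hg, hgH⟩ := exists_nonempty_hasHomology_link K univ (link_down hΔ σ)
    (fun f _ => subset_univ f) ((nontrivial_RH_iff K _ _).1 h)
  have hdisj : Disjoint g σ := (hgH.mem_of_link (link_down hΔ σ)).1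
  rw [hasHomology_congr K _ (link_down hΔ (σ ∪ g)) (link_link hdisj)] at hgH
  refine ⟨σ ∪ g, hgH.mem_of_link hΔ, left_lt_sup.2 fun hgσ => hg.ne_empty ?_,
    (nontrivial_RH_iff K _ _).2 hgH⟩
  exact disjoint_self.1 (hdisj.mono_right hgσ)

open SRPure in
/-- (Homology of descending links.)  If `Δ` is a PR complex over `K`
and `σ ∈ Δ` has `H̃_j(link_Δ σ; K) ≠ 0` for some `j ≥ 0` (cardinality index `j + 1`),
then there is a face `τ ∈ Δ` strictly containing `σ` with `H̃_{j-1}(link_Δ τ; K) ≠ 0`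
(cardinality index `j`). -/
theorem exists_larger_face_with_lower_link_homology
    {V : Type*} [LinearOrder V] [Fintype V] (K : Type*) [Field K]
    (Δ : Set (Finset V)) (hΔ : IsDown Δ) (hPR : IsPR K hΔ)
    (σ : Finset V) (hσ : σ ∈ Δ) (j : ℕ)
    (h : Nontrivial (RH K (link_down hΔ σ) (j + 1))) :
    ∃ τ ∈ Δ, σ ⊂ τ ∧ Nontrivial (RH K (link_down hΔ τ) j) :=
  exists_larger_face_with_lower_link_homology_general K Δ hΔ σ j h
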